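/- Let s ∈ ℝⁿ with ‖s‖₁ = 1. Then the minimum of ‖x‖∞ - ⟨x,s⟩ over ‖x‖₁ ≤ 1 is 0, and x attains this minimum if and only if x_i s_i ≥ 0 for all i and |x_i| = ‖x‖∞ whenever s_i ≠ 0. -/

import Mathlib

open Finset

noncomputable def supNorm {n : ℕ} [NeZero n] (x : Fin n → ℝ) : ℝ :=
  Finset.univ.sup' Finset.univ_nonempty fun i => |x i|

/-!
Since `‖s‖₁ = 1`, the objective is a sum of the pointwise gaps
`‖x‖∞ |sᵢ| - xᵢ sᵢ ≥ |xᵢ| |sᵢ| - xᵢ sᵢ ≥ 0`. Hence it is nonnegative, vanishes at `x = 0`, and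
vanishes exactly when every gap does, i.e. when `xᵢ sᵢ ≥ 0` and `|xᵢ| = ‖x‖∞` wherever `sᵢ ≠ 0`.
-/

section supNorm

variable {n : ℕ} [NeZero n]

theorem abs_le_supNorm (x : Fin n → ℝ) (i : Fin n) : |x i| ≤ supNorm x :=
  Finset.le_sup' (fun j => |x j|) (Finset.mem_univ i)

theorem supNorm_zero : supNorm (0 : Fin n → ℝ) = 0 := by
  simp [supNorm]

theorem supNorm_sub_sum_mul_eq_sum {x s : Fin n → ℝ} (hs : ∑ i, |s i| = 1) :
    supNorm x - ∑ i, x i * s i = ∑ i, (supNorm x * |s i| - x i * s i) := by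
  rw [Finset.sum_sub_distrib, ← Finset.mul_sum, hs, mul_one]

end supNorm

theorem mul_le_mul_abs_of_abs_le {a b M : ℝ} (ha : |a| ≤ M) : a * b ≤ M * |b| :=
  calc a * b ≤ |a| * |b| := abs_mul a b ▸ le_abs_self _
    _ ≤ M * |b| := mul_le_mul_of_nonneg_right ha (abs_nonneg b)

theorem mul_eq_mul_abs_iff_of_abs_le {a b M : ℝ} (ha : |a| ≤ M) :
    a * b = M * |b| ↔ 0 ≤ a * b ∧ (b ≠ 0 → |a| = M) := by
  have h_abs : a * b ≤ |a| * |b| := abs_mul a b ▸ le_abs_self _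
  have h_sup : |a| * |b| ≤ M * |b| := mul_le_mul_of_nonneg_right ha (abs_nonneg b)
  constructor
  · intro h
    refine ⟨h ▸ mul_nonneg ((abs_nonneg a).trans ha) (abs_nonneg b), fun hb => ?_⟩
    exact mul_right_cancel₀ (abs_pos.2 hb).ne' (by linarith)
  · rintro ⟨h_nonneg, h_max⟩
    rcases eq_or_ne b 0 with rfl | hb
    · simp
    · rw [← h_max hb, ← abs_mul, abs_of_nonneg h_nonneg]

theorem stmt12 {n : ℕ} [NeZero n] (s : Fin n → ℝ) (hs : ∑ i, |s i| = 1) :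
    IsLeast {v : ℝ | ∃ x : Fin n → ℝ, (∑ i, |x i| ≤ 1) ∧ v = supNorm x - ∑ i, x i * s i} 0 ∧
    ∀ x : Fin n → ℝ, (∑ i, |x i| ≤ 1) →
      (supNorm x - ∑ i, x i * s i = 0 ↔
        (∀ i, 0 ≤ x i * s i) ∧ ∀ i, s i ≠ 0 → |x i| = supNorm x) := by
  have gap_nonneg (x : Fin n → ℝ) (i : Fin n) : 0 ≤ supNorm x * |s i| - x i * s i :=
    sub_nonneg.2 (mul_le_mul_abs_of_abs_le (abs_le_supNorm x i))
  refine ⟨⟨⟨0, by simp, by simp [supNorm_zero]⟩, ?_⟩, fun x _ => ?_⟩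
  · rintro v ⟨x, -, rfl⟩
    rw [supNorm_sub_sum_mul_eq_sum hs]
    exact Finset.sum_nonneg fun i _ => gap_nonneg x i
  · rw [supNorm_sub_sum_mul_eq_sum hs,
      Finset.sum_eq_zero_iff_of_nonneg fun i _ => gap_nonneg x i, ← forall_and]
    refine forall_congr' fun i => ?_
    rw [sub_eq_zero, eq_comm, mul_eq_mul_abs_iff_of_abs_le (abs_le_supNorm x i)]
    simp only [Finset.mem_univ, true_implies]
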